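/- Let A ⊂ ℝ^k be compact and suppose F has bounded variation along x̄ uniformly over A, with δ̄, ε̄ > 0 such that η^{δ}_{ε,A}(T) < ∞ for every δ ∈ (0,δ̄), ε ∈ (0,ε̄], and assume the modulus-of-continuity hypothesis (C2). For s ∈ (S,T] and t ∈ [s,T], let η^δ_A([s,t]) denote the δ-perturbed cumulative variation of F computed over the interval [s,t] (i.e., with partitions of [s,t] in place of [S,t], followed by the limit ε↓0). Then for every δ ∈ (0,δ̄) and every [s,t] ⊂ [S,T] with s > S: η^δ_A(t) − η^δ_A(s) = η^δ_A([s,t]). -/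

import Mathlib

open Set Metric Filter MeasureTheory
open scoped ENNReal Topology Classical

noncomputable section

/-- Euclidean space `ℝ^n`. -/
abbrev Eucl (n : ℕ) : Type := EuclideanSpace ℝ (Fin n)

/-- A (strict) partition `a = τ 0 < τ 1 < ⋯ < τ N = b` of the interval `[a,b]`. -/
def IsPartition (a b : ℝ) (N : ℕ) (τ : ℕ → ℝ) : Prop :=
  0 < N ∧ τ 0 = a ∧ τ N = b ∧ ∀ i < N, τ i < τ (i + 1)

/-- The mesh (diameter) of the partition `τ` is at most `ε`. -/
def MeshLE (N : ℕ) (τ : ℕ → ℝ) (ε : ℝ) : Prop :=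
  ∀ i < N, τ (i + 1) - τ i ≤ ε

/-- The tube `x̄([s,t]) + δ B` around the arc `x̄` on `[s,t]`. -/
def tube {n : ℕ} (xbar : ℝ → Eucl n) (s t δ : ℝ) : Set (Eucl n) :=
  {y | ∃ r ∈ Icc s t, dist y (xbar r) ≤ δ}

/-- `I^δ(𝒯) = Σᵢ sup { d_H (F(t_{i+1},x,a), F(t_i,x,a)) : x ∈ x̄([t_i,t_{i+1}]) + δB, a ∈ A }`. -/
def variSum {n k : ℕ} (F : ℝ → Eucl n → Eucl k → Set (Eucl n)) (xbar : ℝ → Eucl n)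
    (A : Set (Eucl k)) (δ : ℝ) (N : ℕ) (τ : ℕ → ℝ) : ℝ≥0∞ :=
  ∑ i ∈ Finset.range N,
    ⨆ x ∈ tube xbar (τ i) (τ (i + 1)) δ, ⨆ a ∈ A,
      EMetric.hausdorffEdist (F (τ (i + 1)) x a) (F (τ i) x a)

/-- `η^δ_ε(t)`: the `(δ,ε)`-perturbed cumulative variation of `F` along `x̄`, uniformly
over `A`, on the base interval `[S,t]`.  (For `t = S` there are no partitions and the
supremum is `0`.) -/
def etaE {n k : ℕ} (F : ℝ → Eucl n → Eucl k → Set (Eucl n)) (xbar : ℝ → Eucl n)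
    (A : Set (Eucl k)) (S δ ε t : ℝ) : ℝ≥0∞ :=
  ⨆ (N : ℕ) (τ : ℕ → ℝ) (_ : IsPartition S t N τ) (_ : MeshLE N τ ε),
    variSum F xbar A δ N τ

/-- `η^δ(t) = lim_{ε ↓ 0} η^δ_ε(t)` (the limit of a monotone family: the infimum). -/
def etaD {n k : ℕ} (F : ℝ → Eucl n → Eucl k → Set (Eucl n)) (xbar : ℝ → Eucl n)
    (A : Set (Eucl k)) (S δ t : ℝ) : ℝ≥0∞ :=
  ⨅ (ε : ℝ) (_ : 0 < ε), etaE F xbar A S δ ε t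

/-- `η(t) = lim_{δ ↓ 0} η^δ(t)`: the cumulative variation function of `F` along `x̄`,
uniformly over `A`. -/
def eta {n k : ℕ} (F : ℝ → Eucl n → Eucl k → Set (Eucl n)) (xbar : ℝ → Eucl n)
    (A : Set (Eucl k)) (S t : ℝ) : ℝ≥0∞ :=
  ⨅ (δ : ℝ) (_ : 0 < δ), etaD F xbar A S δ t

/-- Hypothesis (C1): nonempty closed values, measurability in `t`, and uniform
boundedness `F(t,x,a) ⊆ cB` near the arc. -/
def HypC1 {n k : ℕ} (F : ℝ → Eucl n → Eucl k → Set (Eucl n)) (xbar : ℝ → Eucl n)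
    (A : Set (Eucl k)) (S T δbar : ℝ) : Prop :=
  (∀ t x a, (F t x a).Nonempty ∧ IsClosed (F t x a)) ∧
  (∀ (x : Eucl n) (a : Eucl k), ∀ U : Set (Eucl n), IsOpen U →
     MeasurableSet {t | t ∈ Icc S T ∧ (F t x a ∩ U).Nonempty}) ∧
  (∃ c > (0 : ℝ), ∀ t ∈ Icc S T, ∀ a ∈ A, ∀ x : Eucl n, dist x (xbar t) ≤ δbar →
     F t x a ⊆ closedBall 0 c)

/-- Hypothesis (C2): `F(t,x,a) ⊆ F(t,x',a') + γ(|x-x'| + |a-a'|)B` near the arc, where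
`γ` is a modulus of continuity. -/
def HypC2 {n k : ℕ} (F : ℝ → Eucl n → Eucl k → Set (Eucl n)) (xbar : ℝ → Eucl n)
    (A : Set (Eucl k)) (S T δbar : ℝ) (γ : ℝ → ℝ) : Prop :=
  ContinuousOn γ (Ici 0) ∧ MonotoneOn γ (Ici 0) ∧ γ 0 = 0 ∧ (∀ r ≥ (0 : ℝ), 0 ≤ γ r) ∧
  ∀ t ∈ Icc S T, ∀ x x' : Eucl n, ∀ a ∈ A, ∀ a' ∈ A,
    dist x (xbar t) ≤ δbar → dist x' (xbar t) ≤ δbar →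
    ∀ y ∈ F t x a, ∃ z ∈ F t x' a', dist y z ≤ γ (dist x x' + dist a a')

end

/-! A partition of `[S,t]` with mesh `≤ ε` has at most one interval `[p,q]` straddling `s`, and
inserting `s` there costs at most `2γ(κ)`, where `κ` bounds the oscillation of `x̄` over times
`ε` apart: a point `x` within `δ` of `x̄(r)`, `r ∈ [p,q]`, is moved to `x + x̄(s) - x̄(r)`, which is
within `δ` of `x̄(s)` and within `κ` of `x`, so (C2) compares the values of `F` at the two points
at the times `p` and `q`. Hence `η^δ_ε([S,t]) ≤ η^δ_ε([S,s]) + η^δ_ε([s,t]) + 2γ(κ)`; letting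
`ε ↓ 0` and then `κ ↓ 0` gives `≤` for `η^δ`, while `≥` holds already for `η^δ_ε` by concatenating
partitions. Finally `η^δ(s) ≤ η^δ_ε̄(T) < ∞` makes the subtraction legitimate. -/

section Subdivision

variable {a b c s ε : ℝ} {N : ℕ} {τ σ : ℕ → ℝ}

/-- `IsPartition` without `0 < N`, so that dropping the first point stays in the class. -/
def IsSubdivision (a b : ℝ) (N : ℕ) (τ : ℕ → ℝ) : Prop :=
  τ 0 = a ∧ τ N = b ∧ ∀ i < N, τ i < τ (i + 1)

def prependPoint (a : ℝ) (σ : ℕ → ℝ) : ℕ → ℝ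
  | 0 => a
  | i + 1 => σ i

noncomputable def stepSum (g : ℝ → ℝ → ℝ≥0∞) (N : ℕ) (τ : ℕ → ℝ) : ℝ≥0∞ :=
  ∑ i ∈ Finset.range N, g (τ i) (τ (i + 1))

@[simp]
theorem stepSum_zero (g : ℝ → ℝ → ℝ≥0∞) (τ : ℕ → ℝ) : stepSum g 0 τ = 0 :=
  Finset.sum_range_zero _

theorem stepSum_succ (g : ℝ → ℝ → ℝ≥0∞) (N : ℕ) (τ : ℕ → ℝ) :
    stepSum g (N + 1) τ = g (τ 0) (τ 1) + stepSum g N (fun i => τ (i + 1)) := by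
  rw [stepSum, Finset.sum_range_succ', add_comm]
  rfl

theorem stepSum_prependPoint (g : ℝ → ℝ → ℝ≥0∞) (N : ℕ) (a : ℝ) (σ : ℕ → ℝ) :
    stepSum g (N + 1) (prependPoint a σ) = g a (σ 0) + stepSum g N σ :=
  stepSum_succ g N _

namespace IsSubdivision

theorem tail (h : IsSubdivision a c (N + 1) τ) :
    a < τ 1 ∧ IsSubdivision (τ 1) c N (fun i => τ (i + 1)) :=
  ⟨h.1 ▸ h.2.2 0 N.succ_pos, rfl, h.2.1, fun i hi => h.2.2 (i + 1) (by omega)⟩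

theorem prepend (hab : a < b) (h : IsSubdivision b c N σ) :
    IsSubdivision a c (N + 1) (prependPoint a σ) := by
  refine ⟨rfl, h.2.1, fun i hi => ?_⟩
  cases i with
  | zero => exact hab.trans_eq h.1.symm
  | succ i => exact h.2.2 i (by omega)

theorem le (h : IsSubdivision a b N τ) : a ≤ b := by
  induction N generalizing a τ with
  | zero => exact h.1 ▸ h.2.1 ▸ le_rfl
  | succ N ih => exact h.tail.1.le.trans (ih h.tail.2)

theorem isPartition (h : IsSubdivision a b N τ) (hab : a < b) : IsPartition a b N τ := by
  refine ⟨Nat.pos_of_ne_zero fun hN => ?_, h⟩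
  subst hN
  exact hab.ne (h.1.symm.trans h.2.1)

end IsSubdivision

theorem IsPartition.isSubdivision (h : IsPartition a b N τ) : IsSubdivision a b N τ := h.2

theorem IsPartition.lt (h : IsPartition a b N τ) : a < b := by
  obtain ⟨M, rfl⟩ := Nat.exists_eq_add_one_of_ne_zero h.1.ne'
  exact h.isSubdivision.tail.1.trans_le h.isSubdivision.tail.2.le

theorem MeshLE.tail (h : MeshLE (N + 1) τ ε) :
    τ 1 - τ 0 ≤ ε ∧ MeshLE N (fun i => τ (i + 1)) ε :=
  ⟨h 0 N.succ_pos, fun i hi => h (i + 1) (by omega)⟩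

theorem MeshLE.prepend (ha : σ 0 - a ≤ ε) (h : MeshLE N σ ε) :
    MeshLE (N + 1) (prependPoint a σ) ε := by
  intro i hi
  cases i with
  | zero => exact ha
  | succ i => exact h i (by omega)

theorem exists_isPartition_meshLE (hab : a < b) (hε : 0 < ε) :
    ∃ N τ, IsPartition a b N τ ∧ MeshLE N τ ε := by
  set N := ⌈(b - a) / ε⌉₊
  have hN : 0 < N := Nat.ceil_pos.2 (div_pos (sub_pos.2 hab) hε)
  have hstep : (b - a) / N ≤ ε := by
    rw [div_le_iff₀ (Nat.cast_pos.2 hN), ← div_le_iff₀' hε]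
    exact Nat.le_ceil _
  have hstep_pos : 0 < (b - a) / N := div_pos (sub_pos.2 hab) (Nat.cast_pos.2 hN)
  refine ⟨N, fun i => a + i * ((b - a) / N), ⟨hN, by simp, ?_, fun i _ => ?_⟩, fun i _ => ?_⟩
  · field_simp
    ring
  · push_cast
    linarith
  · push_cast
    linarith

variable {g : ℝ → ℝ → ℝ≥0∞}

theorem IsSubdivision.exists_append {N₁ N₂ : ℕ} {τ₁ τ₂ : ℕ → ℝ}
    (h₁ : IsSubdivision a b N₁ τ₁) (hm₁ : MeshLE N₁ τ₁ ε)
    (h₂ : IsSubdivision b c N₂ τ₂) (hm₂ : MeshLE N₂ τ₂ ε) :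
    ∃ N τ, IsSubdivision a c N τ ∧ MeshLE N τ ε ∧
      stepSum g N τ = stepSum g N₁ τ₁ + stepSum g N₂ τ₂ := by
  induction N₁ generalizing a τ₁ with
  | zero =>
    obtain rfl : a = b := h₁.1.symm.trans h₁.2.1
    exact ⟨N₂, τ₂, h₂, hm₂, (zero_add _).symm⟩
  | succ N₁ ih =>
    obtain ⟨N, τ, h, hm, hsum⟩ := ih h₁.tail.2 hm₁.tail.2
    refine ⟨N + 1, prependPoint a τ, h.prepend h₁.tail.1, hm.prepend ?_, ?_⟩
    · rw [h.1, ← h₁.1]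
      exact hm₁.tail.1
    · rw [stepSum_prependPoint, hsum, stepSum_succ, h.1, h₁.1, add_assoc]

/-- Only one step straddles `s`, so the cost `C` of splitting it at `s` is paid once. -/
theorem IsSubdivision.exists_split_le {C : ℝ≥0∞} (h : IsSubdivision a c N τ)
    (hm : MeshLE N τ ε) (has : a < s) (hsc : s < c)
    (hstep : ∀ p q, a ≤ p → p < s → s < q → q ≤ c → q - p ≤ ε → g p q ≤ g p s + g s q + C) :
    ∃ N₁ τ₁ N₂ τ₂, IsSubdivision a s N₁ τ₁ ∧ MeshLE N₁ τ₁ ε ∧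
      IsSubdivision s c N₂ τ₂ ∧ MeshLE N₂ τ₂ ε ∧
      stepSum g N τ ≤ stepSum g N₁ τ₁ + stepSum g N₂ τ₂ + C := by
  induction N generalizing a τ with
  | zero => exact absurd (h.1.symm.trans h.2.1) (has.trans hsc).ne
  | succ N ih =>
    obtain ⟨ha1, htail⟩ := h.tail
    obtain ⟨hm1, hmtail⟩ := hm.tail
    rw [h.1] at hm1
    have hfirst : IsSubdivision a s 1 (prependPoint a fun _ => s) :=
      IsSubdivision.prepend has ⟨rfl, rfl, by simp⟩
    have hmfirst (hs : s ≤ τ 1) : MeshLE 1 (prependPoint a fun _ => s) ε :=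
      MeshLE.prepend (by linarith) fun i hi => by omega
    rcases lt_trichotomy s (τ 1) with hs | rfl | hs
    · refine ⟨1, _, N + 1, prependPoint s _, hfirst, hmfirst hs.le, htail.prepend hs,
        hmtail.prepend (by linarith), ?_⟩
      rw [stepSum_succ, stepSum_prependPoint, stepSum_prependPoint, h.1]
      calc g a (τ 1) + stepSum g N (fun i => τ (i + 1))
          ≤ g a s + g s (τ 1) + C + stepSum g N (fun i => τ (i + 1)) := by
            gcongr
            exact hstep a (τ 1) le_rfl has hs htail.le hm1
        _ = _ := by rw [stepSum_zero, add_zero]; ring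
    · refine ⟨1, _, N, _, hfirst, hmfirst le_rfl, htail, hmtail, ?_⟩
      rw [stepSum_succ, stepSum_prependPoint, h.1, stepSum_zero, add_zero]
      exact le_self_add
    · obtain ⟨N₁, τ₁, N₂, τ₂, h₁, hm₁, h₂, hm₂, hsum⟩ :=
        ih htail hmtail hs fun p q hp => hstep p q (ha1.le.trans hp)
      refine ⟨N₁ + 1, prependPoint a τ₁, N₂, τ₂, h₁.prepend (h₁.1 ▸ ha1),
        hm₁.prepend (by rw [h₁.1]; exact hm1), h₂, hm₂, ?_⟩
      rw [stepSum_succ, stepSum_prependPoint, h.1, h₁.1]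
      simpa only [add_assoc] using add_le_add le_rfl hsum

end Subdivision

theorem biInf_pos_le_add_of_forall_le_add {f g h : ℝ → ℝ≥0∞} (hf : Monotone f) (hg : Monotone g)
    (H : ∀ c : ℝ≥0∞, 0 < c → ∃ ε₀ > 0, ∀ ε, 0 < ε → ε ≤ ε₀ → h ε ≤ f ε + g ε + c) :
    ⨅ (ε : ℝ) (_ : 0 < ε), h ε ≤ (⨅ (ε : ℝ) (_ : 0 < ε), f ε) + ⨅ (ε : ℝ) (_ : 0 < ε), g ε := by
  set If := ⨅ (ε : ℝ) (_ : 0 < ε), f ε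
  set Ig := ⨅ (ε : ℝ) (_ : 0 < ε), g ε
  refine ENNReal.le_of_forall_pos_le_add fun c hc hfin => ?_
  have hc3 : (c : ℝ≥0∞) / 3 ≠ 0 := by simpa using hc.ne'
  obtain ⟨εf, hεf, hf'⟩ : ∃ ε, 0 < ε ∧ f ε < If + c / 3 := by
    simpa only [If, Ig, iInf_lt_iff, exists_prop] using
      ENNReal.lt_add_right (ENNReal.add_lt_top.1 hfin).1.ne hc3
  obtain ⟨εg, hεg, hg'⟩ : ∃ ε, 0 < ε ∧ g ε < Ig + c / 3 := by
    simpa only [If, Ig, iInf_lt_iff, exists_prop] using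
      ENNReal.lt_add_right (ENNReal.add_lt_top.1 hfin).2.ne hc3
  obtain ⟨ε₀, hε₀, hh⟩ := H _ (pos_iff_ne_zero.2 hc3)
  have hε : 0 < min (min εf εg) ε₀ := lt_min (lt_min hεf hεg) hε₀
  calc ⨅ (ε : ℝ) (_ : 0 < ε), h ε ≤ h (min (min εf εg) ε₀) := iInf₂_le _ hε
    _ ≤ f (min (min εf εg) ε₀) + g (min (min εf εg) ε₀) + c / 3 := hh _ hε (min_le_right _ _)
    _ ≤ f εf + g εg + c / 3 := by
      gcongr
      · exact hf ((min_le_left _ _).trans (min_le_left _ _))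
      · exact hg ((min_le_left _ _).trans (min_le_right _ _))
    _ ≤ If + c / 3 + (Ig + c / 3) + c / 3 := by gcongr
    _ = If + Ig + (c / 3 + c / 3 + c / 3) := by ring
    _ = If + Ig + c := by rw [ENNReal.add_thirds]

section Variation

variable {n k : ℕ} {F : ℝ → Eucl n → Eucl k → Set (Eucl n)} {xbar : ℝ → Eucl n}
  {A : Set (Eucl k)} {S T s t δ δbar ε : ℝ} {γ : ℝ → ℝ} {N : ℕ} {τ : ℕ → ℝ}

variable (F xbar A) in
noncomputable def varTerm (δ p q : ℝ) : ℝ≥0∞ :=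
  ⨆ x ∈ tube xbar p q δ, ⨆ a ∈ A, hausdorffEDist (F q x a) (F p x a)

theorem variSum_eq_stepSum : variSum F xbar A δ N τ = stepSum (varTerm F xbar A δ) N τ := rfl

theorem variSum_le_etaE (hp : IsPartition S t N τ) (hm : MeshLE N τ ε) :
    variSum F xbar A δ N τ ≤ etaE F xbar A S δ ε t :=
  le_iSup₂_of_le N τ (le_iSup₂_of_le (f := fun _ _ => variSum F xbar A δ N τ) hp hm le_rfl)

theorem etaE_eq_iSup_prod : etaE F xbar A S δ ε t =
    ⨆ (p : ℕ × (ℕ → ℝ)) (_ : IsPartition S t p.1 p.2 ∧ MeshLE p.1 p.2 ε),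
      variSum F xbar A δ p.1 p.2 := by
  simp only [etaE, iSup_prod, iSup_and]

theorem monotone_etaE : Monotone fun ε => etaE F xbar A S δ ε t :=
  fun _ _ hεε' => iSup₂_le fun _ _ => iSup₂_le fun hp hm =>
    variSum_le_etaE hp fun i hi => (hm i hi).trans hεε'

theorem etaD_le_etaE (hε : 0 < ε) : etaD F xbar A S δ t ≤ etaE F xbar A S δ ε t :=
  iInf₂_le ε hε

theorem etaD_self : etaD F xbar A s δ s = 0 :=
  nonpos_iff_eq_zero.1 <| (etaD_le_etaE one_pos).trans <|
    iSup₂_le fun _ _ => iSup₂_le fun hp _ => (lt_irrefl s hp.lt).elim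

theorem etaE_add_etaE_le (hSs : S < s) (hst : s < t) (hε : 0 < ε) :
    etaE F xbar A S δ ε s + etaE F xbar A s δ ε t ≤ etaE F xbar A S δ ε t := by
  obtain ⟨N₁, τ₁, hne₁⟩ := exists_isPartition_meshLE hSs hε
  obtain ⟨N₂, τ₂, hne₂⟩ := exists_isPartition_meshLE hst hε
  rw [etaE_eq_iSup_prod, etaE_eq_iSup_prod]
  refine ENNReal.biSup_add_biSup_le' ⟨(N₁, τ₁), hne₁⟩ ⟨(N₂, τ₂), hne₂⟩ ?_
  rintro ⟨N₁, τ₁⟩ ⟨hp₁, hm₁⟩ ⟨N₂, τ₂⟩ ⟨hp₂, hm₂⟩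
  obtain ⟨N, τ, h, hm, hsum⟩ :=
    hp₁.isSubdivision.exists_append (g := varTerm F xbar A δ) hm₁ hp₂.isSubdivision hm₂
  rw [variSum_eq_stepSum, variSum_eq_stepSum, ← hsum]
  exact variSum_le_etaE (h.isPartition (hSs.trans hst)) hm

theorem etaD_add_etaD_le (hSs : S < s) (hst : s < t) :
    etaD F xbar A S δ s + etaD F xbar A s δ t ≤ etaD F xbar A S δ t :=
  le_iInf₂ fun _ hε => (add_le_add (etaD_le_etaE hε) (etaD_le_etaE hε)).trans
    (etaE_add_etaE_le hSs hst hε)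

theorem etaE_le_add_of_varTerm_le {C : ℝ≥0∞} (hSs : S < s) (hst : s < t)
    (hstep : ∀ p q, S ≤ p → p < s → s < q → q ≤ t → q - p ≤ ε →
      varTerm F xbar A δ p q ≤ varTerm F xbar A δ p s + varTerm F xbar A δ s q + C) :
    etaE F xbar A S δ ε t ≤ etaE F xbar A S δ ε s + etaE F xbar A s δ ε t + C :=
  iSup₂_le fun N τ => iSup₂_le fun hp hm => by
    obtain ⟨N₁, τ₁, N₂, τ₂, h₁, hm₁, h₂, hm₂, hle⟩ :=
      hp.isSubdivision.exists_split_le hm hSs hst hstep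
    calc variSum F xbar A δ N τ ≤ variSum F xbar A δ N₁ τ₁ + variSum F xbar A δ N₂ τ₂ + C := hle
      _ ≤ _ := by
        gcongr
        · exact variSum_le_etaE (h₁.isPartition hSs) hm₁
        · exact variSum_le_etaE (h₂.isPartition hst) hm₂

theorem HypC2.hausdorffEDist_le (hC2 : HypC2 F xbar A S T δbar γ) {κ : ℝ} {x x' : Eucl n}
    {a : Eucl k} (ht : t ∈ Icc S T) (ha : a ∈ A) (hx : dist x (xbar t) ≤ δbar)
    (hx' : dist x' (xbar t) ≤ δbar) (hxx' : dist x x' ≤ κ) :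
    hausdorffEDist (F t x a) (F t x' a) ≤ ENNReal.ofReal (γ κ) := by
  obtain ⟨-, hmono, -, -, hincl⟩ := hC2
  have hγ : ∀ y z : Eucl n, dist y z = dist x x' → γ (dist y z + dist a a) ≤ γ κ := by
    intro y z hyz
    rw [dist_self, add_zero, hyz]
    exact hmono dist_nonneg (dist_nonneg.trans hxx') hxx'
  refine hausdorffEDist_le_of_mem_edist (fun y hy => ?_) (fun y hy => ?_)
  · obtain ⟨z, hz, hyz⟩ := hincl t ht x x' a ha a ha hx hx' y hy
    exact ⟨z, hz, edist_dist y z ▸ ENNReal.ofReal_le_ofReal (hyz.trans (hγ x x' rfl))⟩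
  · obtain ⟨z, hz, hyz⟩ := hincl t ht x' x a ha a ha hx' hx y hy
    exact ⟨z, hz, edist_dist y z ▸ ENNReal.ofReal_le_ofReal (hyz.trans (hγ x' x (dist_comm _ _)))⟩

theorem HypC2.exists_pos_lt (hC2 : HypC2 F xbar A S T δbar γ) {r : ℝ} {c : ℝ≥0∞} (hr : 0 < r)
    (hc : 0 < c) : ∃ κ, 0 < κ ∧ κ < r ∧ 2 * ENNReal.ofReal (γ κ) < c := by
  obtain ⟨hcont, -, hγ0, -, -⟩ := hC2
  have hlim : Tendsto (fun κ => 2 * ENNReal.ofReal (γ κ)) (𝓝[>] 0) (𝓝 0) := by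
    have hγ := ((hcont 0 self_mem_Ici).mono Ioi_subset_Ici_self).tendsto
    rw [hγ0] at hγ
    simpa using
      ENNReal.Tendsto.const_mul (ENNReal.tendsto_ofReal hγ) (Or.inr ENNReal.ofNat_ne_top)
  obtain ⟨κ, ⟨hκ0, hκr⟩, hκc⟩ :=
    (Filter.Eventually.and (Ioo_mem_nhdsGT hr) (hlim.eventually (gt_mem_nhds hc))).exists
  exact ⟨κ, hκ0, hκr, hκc⟩

theorem varTerm_le_add {p s q δ κ : ℝ} {C : ℝ≥0∞} (hps : p ≤ s) (hsq : s ≤ q)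
    (hosc : ∀ u ∈ Icc p q, ∀ v ∈ Icc p q, dist (xbar u) (xbar v) ≤ κ)
    (hF : ∀ u ∈ Icc p q, ∀ a ∈ A, ∀ x x', dist x (xbar u) ≤ δ + κ → dist x' (xbar u) ≤ δ + κ →
      dist x x' ≤ κ → hausdorffEDist (F u x a) (F u x' a) ≤ C) :
    varTerm F xbar A δ p q ≤ varTerm F xbar A δ p s + varTerm F xbar A δ s q + 2 * C := by
  refine iSup₂_le fun x ⟨r, hr, hxr⟩ => iSup₂_le fun a ha => ?_
  have hs : s ∈ Icc p q := ⟨hps, hsq⟩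
  set x' := x + (xbar s - xbar r)
  have hx's : dist x' (xbar s) ≤ δ := by
    rwa [dist_eq_norm, show x' - xbar s = x - xbar r by simp only [x']; abel, ← dist_eq_norm]
  have hxx' : dist x x' ≤ κ := by
    rw [dist_self_add_right, ← dist_eq_norm]
    exact hosc s hs r hr
  have hnear : ∀ u ∈ Icc p q, dist x (xbar u) ≤ δ + κ ∧ dist x' (xbar u) ≤ δ + κ := fun u hu =>
    ⟨(dist_triangle _ _ _).trans (add_le_add hxr (hosc r hr u hu)),
      (dist_triangle _ _ _).trans (add_le_add hx's (hosc s hs u hu))⟩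
  have hp : p ∈ Icc p q := left_mem_Icc.2 (hps.trans hsq)
  have hq : q ∈ Icc p q := right_mem_Icc.2 (hps.trans hsq)
  have hFq := hF q hq a ha x x' (hnear q hq).1 (hnear q hq).2 hxx'
  have hFp := hF p hp a ha x x' (hnear p hp).1 (hnear p hp).2 hxx'
  rw [hausdorffEDist_comm] at hFp
  have hL : hausdorffEDist (F s x' a) (F p x' a) ≤ varTerm F xbar A δ p s :=
    le_iSup₂_of_le x' ⟨s, right_mem_Icc.2 hps, hx's⟩ (le_iSup₂_of_le a ha le_rfl)
  have hR : hausdorffEDist (F q x' a) (F s x' a) ≤ varTerm F xbar A δ s q :=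
    le_iSup₂_of_le x' ⟨s, left_mem_Icc.2 hsq, hx's⟩ (le_iSup₂_of_le a ha le_rfl)
  calc hausdorffEDist (F q x a) (F p x a)
      ≤ hausdorffEDist (F q x a) (F q x' a) + hausdorffEDist (F q x' a) (F s x' a)
        + hausdorffEDist (F s x' a) (F p x' a) + hausdorffEDist (F p x' a) (F p x a) := by
        refine hausdorffEDist_triangle.trans (add_le_add ?_ le_rfl)
        refine hausdorffEDist_triangle.trans (add_le_add ?_ le_rfl)
        exact hausdorffEDist_triangle
    _ ≤ C + varTerm F xbar A δ s q + varTerm F xbar A δ p s + C := by gcongr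
    _ = _ := by ring

theorem exists_etaE_le_add (hC2 : HypC2 F xbar A S T δbar γ) (hx : ContinuousOn xbar (Icc S T))
    {κ : ℝ} (hSs : S < s) (hst : s < t) (htT : t ≤ T) (hκ : 0 < κ) (hδκ : δ + κ ≤ δbar) :
    ∃ ε₀ > 0, ∀ ε, 0 < ε → ε ≤ ε₀ → etaE F xbar A S δ ε t ≤
      etaE F xbar A S δ ε s + etaE F xbar A s δ ε t + 2 * ENNReal.ofReal (γ κ) := by
  obtain ⟨ε₀, hε₀, hosc⟩ :=
    Metric.uniformContinuousOn_iff_le.1 (isCompact_Icc.uniformContinuousOn_of_continuous hx) κ hκ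
  refine ⟨ε₀, hε₀, fun ε _ hεε₀ => etaE_le_add_of_varTerm_le hSs hst ?_⟩
  intro p q hSp hps hsq hqt hpq
  have hsub : Icc p q ⊆ Icc S T := Icc_subset_Icc hSp (hqt.trans htT)
  refine varTerm_le_add hps.le hsq.le (fun u hu v hv => hosc u (hsub hu) v (hsub hv) ?_)
    fun u hu a ha x x' hx hx' hxx' => hC2.hausdorffEDist_le (hsub hu) ha
      (hx.trans hδκ) (hx'.trans hδκ) hxx'
  rw [Real.dist_eq, abs_le]
  constructor <;> linarith [hu.1, hu.2, hv.1, hv.2]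

theorem etaD_le_add (hC2 : HypC2 F xbar A S T δbar γ) (hx : ContinuousOn xbar (Icc S T))
    (hSs : S < s) (hst : s < t) (htT : t ≤ T) (hδ : δ < δbar) :
    etaD F xbar A S δ t ≤ etaD F xbar A S δ s + etaD F xbar A s δ t := by
  refine biInf_pos_le_add_of_forall_le_add monotone_etaE monotone_etaE fun c hc => ?_
  obtain ⟨κ, hκ, hκδ, hκc⟩ := hC2.exists_pos_lt (sub_pos.2 hδ) hc
  obtain ⟨ε₀, hε₀, hle⟩ := exists_etaE_le_add (δ := δ) hC2 hx hSs hst htT hκ (by linarith)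
  exact ⟨ε₀, hε₀, fun ε hε hεε₀ => (hle ε hε hεε₀).trans (by gcongr)⟩

end Variation

theorem stmt10_general {n k : ℕ} (S T : ℝ)
    (A : Set (Eucl k))
    (F : ℝ → Eucl n → Eucl k → Set (Eucl n))
    (xbar : ℝ → Eucl n) (hx : ContinuousOn xbar (Icc S T))
    (δbar εbar : ℝ) (hεbar : 0 < εbar)
    (hfin : ∀ δ ε : ℝ, 0 < δ → δ < δbar → 0 < ε → ε ≤ εbar →
      etaE F xbar A S δ ε T < ⊤)
    (γ : ℝ → ℝ) (hC2 : HypC2 F xbar A S T δbar γ) :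
    ∀ δ : ℝ, 0 < δ → δ < δbar →
      ∀ s t : ℝ, S < s → s ≤ t → t ≤ T →
        etaD F xbar A S δ t - etaD F xbar A S δ s = etaD F xbar A s δ t := by
  intro δ hδ hδδbar s t hSs hst htT
  rcases hst.eq_or_lt with rfl | hst
  · rw [etaD_self, tsub_self]
  have hsT : etaE F xbar A S δ εbar s ≤ etaE F xbar A S δ εbar T := by
    rcases (hst.trans_le htT).le.eq_or_lt with rfl | hsT
    · exact le_rfl
    · exact le_self_add.trans (etaE_add_etaE_le hSs hsT hεbar)
  have hfin_s : etaD F xbar A S δ s ≠ ⊤ :=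
    ((etaD_le_etaE hεbar).trans hsT |>.trans_lt (hfin δ εbar hδ hδδbar hεbar le_rfl)).ne
  exact ENNReal.sub_eq_of_eq_add_rev hfin_s
    (le_antisymm (etaD_le_add hC2 hx hSs hst htT hδδbar) (etaD_add_etaD_le hSs hst))

/-- The increments of the `δ`-perturbed cumulative variation function
coincide with the interval-restricted `δ`-perturbed cumulative variation:
`η^δ_A(t) − η^δ_A(s) = η^δ_A([s,t])` for `S < s ≤ t ≤ T`.  (Here `etaD F xbar A s δ t` is
the `δ`-perturbed cumulative variation computed with partitions of `[s,t]`.) -/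
theorem stmt10 {n k : ℕ} (S T : ℝ) (hST : S < T)
    (A : Set (Eucl k)) (hA : IsCompact A)
    (F : ℝ → Eucl n → Eucl k → Set (Eucl n))
    (hFval : ∀ t x a, (F t x a).Nonempty ∧ IsClosed (F t x a))
    (xbar : ℝ → Eucl n) (hx : ContinuousOn xbar (Icc S T))
    (hBV : eta F xbar A S T < ⊤)
    (δbar εbar : ℝ) (hδbar : 0 < δbar) (hεbar : 0 < εbar)
    (hfin : ∀ δ ε : ℝ, 0 < δ → δ < δbar → 0 < ε → ε ≤ εbar →
      etaE F xbar A S δ ε T < ⊤)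
    (γ : ℝ → ℝ) (hC2 : HypC2 F xbar A S T δbar γ) :
    ∀ δ : ℝ, 0 < δ → δ < δbar →
      ∀ s t : ℝ, S < s → s ≤ t → t ≤ T →
        etaD F xbar A S δ t - etaD F xbar A S δ s = etaD F xbar A s δ t :=
  stmt10_general S T A F xbar hx δbar εbar hεbar hfin γ hC2
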